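/- Single-term cross-correlation bound under approximate uniformity: if the conditional distribution q of x_j given x_i = x' satisfies q = uniform + q' with ‖q'‖₁ ≤ λ^t, p is subnormalized, and p(x)ρ_x ≤ 2^{-h}ρ for all x, then Σ_x q(x) p(x') p(x) Tr[ρ_{x'} ρ^{-1/2} ρ_x ρ^{-1/2}] ≤ p(x')/|X| + p(x') 2^{-h} λ^t. -/

import Mathlib

open scoped BigOperators ComplexOrder

/-- Apply a real function to a Hermitian matrix via its spectral decomposition
(zero if the matrix is not Hermitian). -/
noncomputable def matFun {n : Type*} [Fintype n] [DecidableEq n]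
    (A : Matrix n n ℂ) (f : ℝ → ℝ) : Matrix n n ℂ :=
  if h : A.IsHermitian then h.cfc f else 0

/-- Moore–Penrose pseudoinverse power of a Hermitian matrix: eigenvalue `0` is sent to `0`,
nonzero eigenvalues `t` to `t ^ r`. -/
noncomputable def pinvPow {n : Type*} [Fintype n] [DecidableEq n]
    (A : Matrix n n ℂ) (r : ℝ) : Matrix n n ℂ :=
  matFun A (fun t => if t = 0 then 0 else Real.rpow t r)

/-- Matrix logarithm (base 2) on the support of a Hermitian matrix. -/
noncomputable def matLog2 {n : Type*} [Fintype n] [DecidableEq n]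
    (A : Matrix n n ℂ) : Matrix n n ℂ :=
  matFun A (fun t => if t = 0 then 0 else Real.logb 2 t)

/-- Schatten 1-norm (trace norm) of a complex matrix: the trace of `√(Aᴴ A)`. -/
noncomputable def traceNorm {n : Type*} [Fintype n] [DecidableEq n]
    (A : Matrix n n ℂ) : ℝ :=
  (((Matrix.posSemidef_conjTranspose_mul_self A).1.eigenvectorUnitary.1 *
    Matrix.diagonal ((fun r : ℝ => (r : ℂ)) ∘ Real.sqrt ∘ (Matrix.posSemidef_conjTranspose_mul_self A).1.eigenvalues) *
    (star (Matrix.posSemidef_conjTranspose_mul_self A).1.eigenvectorUnitary : Matrix n n ℂ)).trace).re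

/-- Schatten 2-norm (Frobenius norm) of a complex matrix. -/
noncomputable def frobNorm {n : Type*} [Fintype n] [DecidableEq n]
    (A : Matrix n n ℂ) : ℝ :=
  Real.sqrt (((A.conjTranspose * A).trace).re)

/-- Squared Frobenius norm. -/
noncomputable def frobSq {n : Type*} [Fintype n] [DecidableEq n]
    (A : Matrix n n ℂ) : ℝ :=
  ((A.conjTranspose * A).trace).re

/-- Schatten ∞-norm (operator norm): square root of the largest eigenvalue of `Aᴴ A`. -/
noncomputable def matOpNorm {n : Type*} [Fintype n] [DecidableEq n]
    (A : Matrix n n ℂ) : ℝ :=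
  Real.sqrt (⨆ i, (Matrix.posSemidef_conjTranspose_mul_self A).1.eigenvalues i)

/-! With `B = ρ^{-1/2}` the pseudo-inverse square root, `B ρ B` is the support projection of
`ρ`, so `M ↦ Re Tr[ρ_{x'} B M B]` is a positive functional bounded by `1` at `ρ`. Hence the
weights `c x = p(x') p(x) Tr[ρ_{x'} B ρₓ B]` are nonnegative, sum to at most `p(x')` (as
`ρ = ∑ p(x) ρₓ`), and are each at most `p(x') 2^{-h}` (conjugate `p(x) ρₓ ≤ 2^{-h} ρ` by `B`).
Splitting `q` into its uniform part and `q'` gives the two terms of the bound. -/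

open scoped MatrixOrder

namespace Matrix

variable {n : Type*} [Fintype n]

lemma re_trace_mul_conj_smul (A B M : Matrix n n ℂ) (c : ℝ) :
    (A * B * (c • M) * B).trace.re = c * (A * B * M * B).trace.re := by
  rw [Matrix.mul_smul, Matrix.smul_mul, trace_smul, Complex.smul_re, smul_eq_mul]

lemma re_trace_mul_conj_sum_smul {ι : Type*} [Fintype ι] (A B : Matrix n n ℂ) (c : ι → ℝ)
    (M : ι → Matrix n n ℂ) :
    (A * B * (∑ i, c i • M i) * B).trace.re = ∑ i, c i * (A * B * M i * B).trace.re := by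
  simp only [Matrix.mul_sum, Matrix.sum_mul, trace_sum, Complex.re_sum, re_trace_mul_conj_smul]

variable [DecidableEq n]

lemma pinvPow_eq_cfc {A : Matrix n n ℂ} (hA : A.IsHermitian) (r : ℝ) :
    pinvPow A r = cfc (fun t : ℝ => if t = 0 then 0 else t ^ r) A := by
  rw [pinvPow, matFun, dif_pos hA, hA.cfc_eq]
  rfl

lemma isSelfAdjoint_pinvPow (A : Matrix n n ℂ) (r : ℝ) : IsSelfAdjoint (pinvPow A r) := by
  by_cases hA : A.IsHermitian
  · rw [pinvPow_eq_cfc hA]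
    exact cfc_predicate _ A
  · rw [pinvPow, matFun, dif_neg hA]
    exact .zero _

lemma PosSemidef.pinvPow_neg_half_mul_mul_le_one {A : Matrix n n ℂ} (hA : A.PosSemidef) :
    pinvPow A (-(1 / 2)) * A * pinvPow A (-(1 / 2)) ≤ 1 := by
  set f : ℝ → ℝ := fun t => if t = 0 then 0 else t ^ (-(1 / 2 : ℝ))
  have hprod :
      pinvPow A (-(1 / 2)) * A * pinvPow A (-(1 / 2)) = cfc (fun t => f t * t * f t) A := by
    have hfin := A.finite_real_spectrum
    rw [cfc_mul _ f A (hfin.continuousOn _) (hfin.continuousOn _),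
      cfc_mul f _ A (hfin.continuousOn _) (hfin.continuousOn _), cfc_id' ℝ A, pinvPow_eq_cfc hA.1]
  rw [hprod]
  refine cfc_le_one _ A fun t ht => ?_
  have ht0 : 0 ≤ t := spectrum_nonneg_of_nonneg hA.nonneg ht
  rcases ht0.eq_or_lt with rfl | htpos
  · simp [f]
  · simp only [f, if_neg htpos.ne']
    rw [mul_right_comm, ← Real.rpow_add htpos]
    norm_num [Real.rpow_neg_one, htpos.ne']

lemma re_trace_mul_nonneg {A B : Matrix n n ℂ} (hA : A.PosSemidef) (hB : B.PosSemidef) :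
    0 ≤ (A * B).trace.re := by
  have hconj : (CFC.sqrt A * B * CFC.sqrt A).PosSemidef := by
    rw [← nonneg_iff_posSemidef]
    exact conjugate_nonneg_of_nonneg hB.nonneg (CFC.sqrt_nonneg A)
  have htr : (A * B).trace = (CFC.sqrt A * B * CFC.sqrt A).trace := by
    conv_lhs => rw [← CFC.sqrt_mul_sqrt_self A hA.nonneg, mul_assoc]
    rw [trace_mul_comm]
  rw [htr]
  exact (RCLike.nonneg_iff.mp hconj.trace_nonneg).1

lemma re_trace_mul_le_of_le {A M N : Matrix n n ℂ} (hA : A.PosSemidef) (h : M ≤ N) :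
    (A * M).trace.re ≤ (A * N).trace.re := by
  have := re_trace_mul_nonneg hA (le_iff.mp h)
  rwa [Matrix.mul_sub, trace_sub, Complex.sub_re, sub_nonneg] at this

lemma re_trace_mul_conj_nonneg {A B M : Matrix n n ℂ} (hA : A.PosSemidef) (hB : IsSelfAdjoint B)
    (hM : 0 ≤ M) : 0 ≤ (A * B * M * B).trace.re := by
  simpa only [hB.star_eq, mul_assoc] using
    re_trace_mul_nonneg hA (nonneg_iff_posSemidef.mp (star_left_conjugate_nonneg hM B))

lemma re_trace_mul_conj_le_of_le {A B M N : Matrix n n ℂ} (hA : A.PosSemidef)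
    (hB : IsSelfAdjoint B) (h : M ≤ N) :
    (A * B * M * B).trace.re ≤ (A * B * N * B).trace.re := by
  simpa only [hB.star_eq, mul_assoc] using
    re_trace_mul_le_of_le hA (star_left_conjugate_le_conjugate h B)

end Matrix

lemma sum_mul_le_of_eq_inv_card_add {X : Type*} [Fintype X] {q q' c : X → ℝ} {a b ε : ℝ}
    (hq : ∀ x, q x = 1 / Fintype.card X + q' x) (hq' : ∑ x, |q' x| ≤ ε)
    (hc0 : ∀ x, 0 ≤ c x) (hcb : ∀ x, c x ≤ b) (hb : 0 ≤ b) (hca : ∑ x, c x ≤ a) :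
    ∑ x, q x * c x ≤ a / Fintype.card X + b * ε := by
  have hdev : ∑ x, q' x * c x ≤ b * ε :=
    calc ∑ x, q' x * c x ≤ ∑ x, |q' x| * b := Finset.sum_le_sum fun x _ =>
          mul_le_mul (le_abs_self _) (hcb x) (hc0 x) (abs_nonneg _)
      _ = b * ∑ x, |q' x| := by rw [← Finset.sum_mul, mul_comm]
      _ ≤ b * ε := mul_le_mul_of_nonneg_left hq' hb
  have hunif : ∑ x, c x / Fintype.card X ≤ a / Fintype.card X := by
    rw [← Finset.sum_div]
    exact div_le_div_of_nonneg_right hca (Nat.cast_nonneg _)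
  calc ∑ x, q x * c x = ∑ x, c x / Fintype.card X + ∑ x, q' x * c x := by
        rw [← Finset.sum_add_distrib]
        exact Finset.sum_congr rfl fun x _ => by rw [hq]; ring
    _ ≤ a / Fintype.card X + b * ε := add_le_add hunif hdev

theorem stmt18_general {X : Type*} [Fintype X] {d : ℕ}
    (p : X → ℝ) (hp0 : ∀ x, 0 ≤ p x)
    (ρv : X → Matrix (Fin d) (Fin d) ℂ)
    (hρv : ∀ x, (ρv x).PosSemidef ∧ (ρv x).trace = 1)
    (ρ : Matrix (Fin d) (Fin d) ℂ) (hρ : ρ = ∑ x, (p x : ℝ) • ρv x)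
    (h : ℝ) (hop : ∀ x, ((2 : ℝ) ^ (-h) • ρ - (p x : ℝ) • ρv x).PosSemidef)
    (lam : ℝ) (t : ℕ)
    (q q' : X → ℝ)
    (hdecomp : ∀ x, q x = 1 / (Fintype.card X : ℝ) + q' x)
    (hq'1 : ∑ x, |q' x| ≤ lam ^ t)
    (x' : X) :
    ∑ x, q x * (p x' * p x *
        ((ρv x' * pinvPow ρ (-(1/2 : ℝ)) * ρv x * pinvPow ρ (-(1/2 : ℝ))).trace).re)
      ≤ p x' / (Fintype.card X : ℝ) + p x' * (2 : ℝ) ^ (-h) * lam ^ t := by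
  set B := pinvPow ρ (-(1 / 2 : ℝ))
  have hB : IsSelfAdjoint B := Matrix.isSelfAdjoint_pinvPow ρ _
  obtain ⟨hσ, hσ1⟩ := hρv x'
  have hρ0 : ρ.PosSemidef := hρ ▸ Matrix.posSemidef_sum _ fun x _ => (hρv x).1.smul (hp0 x)
  have hρ1 : (ρv x' * B * ρ * B).trace.re ≤ 1 := by
    have := Matrix.re_trace_mul_le_of_le hσ hρ0.pinvPow_neg_half_mul_mul_le_one
    rwa [mul_one, hσ1, Complex.one_re, ← mul_assoc, ← mul_assoc] at this
  have hc0 : ∀ x, 0 ≤ p x' * p x * (ρv x' * B * ρv x * B).trace.re := fun x =>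
    mul_nonneg (mul_nonneg (hp0 x') (hp0 x))
      (Matrix.re_trace_mul_conj_nonneg hσ hB (Matrix.nonneg_iff_posSemidef.mpr (hρv x).1))
  have hcb : ∀ x, p x' * p x * (ρv x' * B * ρv x * B).trace.re ≤ p x' * (2 : ℝ) ^ (-h) :=
    fun x => by
    have := Matrix.re_trace_mul_conj_le_of_le hσ hB (Matrix.le_iff.mpr (hop x))
    rw [Matrix.re_trace_mul_conj_smul, Matrix.re_trace_mul_conj_smul] at this
    rw [mul_assoc]
    exact mul_le_mul_of_nonneg_left (this.trans (mul_le_of_le_one_right (by positivity) hρ1))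
      (hp0 x')
  have hsum : ∑ x, p x' * p x * (ρv x' * B * ρv x * B).trace.re ≤ p x' := by
    calc ∑ x, p x' * p x * (ρv x' * B * ρv x * B).trace.re
        = p x' * (ρv x' * B * ρ * B).trace.re := by
          rw [hρ, Matrix.re_trace_mul_conj_sum_smul, Finset.mul_sum]
          exact Finset.sum_congr rfl fun x _ => mul_assoc _ _ _
      _ ≤ p x' := mul_le_of_le_one_right (hp0 x') hρ1
  exact sum_mul_le_of_eq_inv_card_add hdecomp hq'1 hc0 hcb
    (mul_nonneg (hp0 x') (by positivity)) hsum

/-- Single-term cross-correlation bound under approximate uniformity: if the conditional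
distribution `q` of `x_j` given `x_i = x'` satisfies `q = uniform + q'` with `‖q'‖₁ ≤ λ^t`,
`p` is subnormalized, and `p(x) ρₓ ≤ 2^{-h} ρ` for all `x`, then
`∑ₓ q(x) p(x') p(x) Tr[ρ_{x'} ρ^{-1/2} ρₓ ρ^{-1/2}] ≤ p(x')/|X| + p(x') 2^{-h} λ^t`. -/
theorem stmt18 {X : Type*} [Fintype X] [Nonempty X] {d : ℕ}
    (p : X → ℝ) (hp0 : ∀ x, 0 ≤ p x) (hp1 : ∑ x, p x ≤ 1)
    (ρv : X → Matrix (Fin d) (Fin d) ℂ)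
    (hρv : ∀ x, (ρv x).PosSemidef ∧ (ρv x).trace = 1)
    (ρ : Matrix (Fin d) (Fin d) ℂ) (hρ : ρ = ∑ x, (p x : ℝ) • ρv x)
    (h : ℝ) (hop : ∀ x, ((2 : ℝ) ^ (-h) • ρ - (p x : ℝ) • ρv x).PosSemidef)
    (lam : ℝ) (hlam : 0 ≤ lam) (t : ℕ)
    (q q' : X → ℝ) (hq0 : ∀ x, 0 ≤ q x)
    (hdecomp : ∀ x, q x = 1 / (Fintype.card X : ℝ) + q' x)
    (hq'1 : ∑ x, |q' x| ≤ lam ^ t)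
    (x' : X) :
    ∑ x, q x * (p x' * p x *
        ((ρv x' * pinvPow ρ (-(1/2 : ℝ)) * ρv x * pinvPow ρ (-(1/2 : ℝ))).trace).re)
      ≤ p x' / (Fintype.card X : ℝ) + p x' * (2 : ℝ) ^ (-h) * lam ^ t :=
  stmt18_general p hp0 ρv hρv ρ hρ h hop lam t q q' hdecomp hq'1 x'
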